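/- The Log-Cholesky distance d_LC(A,B) = (‖⌊chol(A)⌋ − ⌊chol(B)⌋‖_F² + ‖log D(chol(A)) − log D(chol(B))‖_F²)^{1/2} defines a metric on the m×m symmetric positive definite matrices; in particular d_LC(A,B) = 0 implies A = B. -/

import Mathlib

open Matrix

/-- Frobenius norm of a real matrix. -/
noncomputable def frobNorm {m : ℕ} (A : Matrix (Fin m) (Fin m) ℝ) : ℝ :=
  Real.sqrt (∑ i, ∑ j, (A i j) ^ 2)

/-- Strictly lower triangular part of a matrix. -/
def strictLower {m : ℕ} (L : Matrix (Fin m) (Fin m) ℝ) : Matrix (Fin m) (Fin m) ℝ :=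
  Matrix.of fun i j => if j < i then L i j else 0

/-- Diagonal matrix whose entries are the logarithms of the diagonal of `L`. -/
noncomputable def logDiag {m : ℕ} (L : Matrix (Fin m) (Fin m) ℝ) :
    Matrix (Fin m) (Fin m) ℝ :=
  Matrix.diagonal fun i => Real.log (L i i)

/-- The Log-Cholesky distance. -/
noncomputable def dLC {m : ℕ} (chol : Matrix (Fin m) (Fin m) ℝ → Matrix (Fin m) (Fin m) ℝ)
    (A B : Matrix (Fin m) (Fin m) ℝ) : ℝ :=
  Real.sqrt (frobNorm (strictLower (chol A) - strictLower (chol B)) ^ 2 +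
    frobNorm (logDiag (chol A) - logDiag (chol B)) ^ 2)

/-! `d_LC` is the pullback, along `A ↦ (⌊chol A⌋, log D(chol A))`, of the `ℓ²` distance on pairs
of Frobenius-normed matrices, hence a pseudometric. It separates SPD matrices because on lower
triangular matrices with positive diagonal the map `L ↦ (⌊L⌋, log D(L))` is injective (`log` is
injective on positive reals), and `A = chol A * (chol A)ᵀ`. -/

attribute [local instance] Matrix.frobeniusNormedAddCommGroup

lemma frobNorm_eq_norm {m : ℕ} (A : Matrix (Fin m) (Fin m) ℝ) : frobNorm A = ‖A‖ := by
  simp only [frobNorm, frobenius_norm_def, Real.norm_eq_abs, Real.rpow_two, sq_abs,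
    Real.sqrt_eq_rpow]

noncomputable def logCholeskyCoords {m : ℕ} (L : Matrix (Fin m) (Fin m) ℝ) :
    WithLp 2 (Matrix (Fin m) (Fin m) ℝ × Matrix (Fin m) (Fin m) ℝ) :=
  WithLp.toLp 2 (strictLower L, logDiag L)

lemma dLC_eq_dist {m : ℕ} (chol : Matrix (Fin m) (Fin m) ℝ → Matrix (Fin m) (Fin m) ℝ)
    (A B : Matrix (Fin m) (Fin m) ℝ) :
    dLC chol A B = dist (logCholeskyCoords (chol A)) (logCholeskyCoords (chol B)) := by
  rw [WithLp.prod_dist_eq_of_L2, dLC, frobNorm_eq_norm, frobNorm_eq_norm]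
  rfl

lemma logCholeskyCoords_injOn {m : ℕ} :
    Set.InjOn logCholeskyCoords
      {L : Matrix (Fin m) (Fin m) ℝ | (∀ i j, i < j → L i j = 0) ∧ ∀ i, 0 < L i i} := by
  rintro L ⟨hL, hLd⟩ M ⟨hM, hMd⟩ h
  obtain ⟨hlow, hlog⟩ : strictLower L = strictLower M ∧ logDiag L = logDiag M := by
    simpa [logCholeskyCoords] using h
  ext i j
  rcases lt_trichotomy j i with hji | rfl | hij
  · simpa [strictLower, hji] using congrFun₂ hlow i j
  · have := congrFun₂ hlog j j
    simp only [logDiag, diagonal_apply_eq] at this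
    exact Real.log_injOn_pos (hLd j) (hMd j) this
  · rw [hL i j hij, hM i j hij]

/-- The Log-Cholesky distance is a metric on the symmetric positive definite
matrices; in particular `d_LC(A,B) = 0` implies `A = B`.  Here `chol` is any map
assigning to each SPD matrix its (unique) lower-triangular Cholesky factor with
positive diagonal. -/
theorem log_cholesky_distance_is_metric {m : ℕ}
    (chol : Matrix (Fin m) (Fin m) ℝ → Matrix (Fin m) (Fin m) ℝ)
    (hlow : ∀ A : Matrix (Fin m) (Fin m) ℝ, A.PosDef → ∀ i j, i < j → chol A i j = 0)
    (hdiag : ∀ A : Matrix (Fin m) (Fin m) ℝ, A.PosDef → ∀ i, 0 < chol A i i)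
    (hfact : ∀ A : Matrix (Fin m) (Fin m) ℝ, A.PosDef → A = chol A * (chol A)ᵀ) :
    (∀ A B : Matrix (Fin m) (Fin m) ℝ, A.PosDef → B.PosDef → 0 ≤ dLC chol A B) ∧
    (∀ A B : Matrix (Fin m) (Fin m) ℝ, A.PosDef → B.PosDef →
        dLC chol A B = dLC chol B A) ∧
    (∀ A B C : Matrix (Fin m) (Fin m) ℝ, A.PosDef → B.PosDef → C.PosDef →
        dLC chol A C ≤ dLC chol A B + dLC chol B C) ∧
    (∀ A B : Matrix (Fin m) (Fin m) ℝ, A.PosDef → B.PosDef →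
        (dLC chol A B = 0 ↔ A = B)) := by
  simp only [dLC_eq_dist]
  refine ⟨fun _ _ _ _ => dist_nonneg, fun _ _ _ _ => dist_comm _ _,
    fun _ _ _ _ _ _ => dist_triangle _ _ _, fun A B hA hB => ?_⟩
  rw [dist_eq_zero]
  refine ⟨fun h => ?_, fun h => h ▸ rfl⟩
  have hchol : chol A = chol B :=
    logCholeskyCoords_injOn ⟨hlow A hA, hdiag A hA⟩ ⟨hlow B hB, hdiag B hB⟩ h
  rw [hfact A hA, hfact B hB, hchol]
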